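/- Assume (H0) and d₁, d₂, l > 0. Then for every natural number k and every real τ, λ = 0 is not a root of the characteristic equation λ² + A_k·λ + B_k + (−b₁₁·λ + C_k)·exp(−λτ) = 0; equivalently, B_k + C_k > 0 and hence B_k + C_k ≠ 0. -/

import Mathlib

open Real

/-- Δ = M² − 4·K·(a·m + c·p)·(a·r₂ + c·d − c·r₀) with M = a·m + c·p + K·(a·r₂ + c·d). -/
noncomputable def Delta (r₀ r₂ K d a p c m : ℝ) : ℝ :=
  (a*m + c*p + K*(a*r₂ + c*d))^2 - 4*K*(a*m + c*p)*(a*r₂ + c*d - c*r₀)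

/-- The positive equilibrium predator density v⋆. -/
noncomputable def vstar (r₀ r₂ K d a p c m : ℝ) : ℝ :=
  (-(a*m + c*p + K*(a*r₂ + c*d)) + Real.sqrt (Delta r₀ r₂ K d a p c m)) / (2*K*(a*m + c*p))

/-- The positive equilibrium prey density u⋆ = (r₂ + m·v⋆)/c. -/
noncomputable def ustar (r₀ r₂ K d a p c m : ℝ) : ℝ := (r₂ + m * vstar r₀ r₂ K d a p c m) / c

/-- Linearization coefficient a₁₂. -/
noncomputable def a12 (r₀ r₂ K d a p c m : ℝ) : ℝ :=
  -K*r₀*ustar r₀ r₂ K d a p c m / (1 + K*vstar r₀ r₂ K d a p c m)^2 - p*ustar r₀ r₂ K d a p c m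

/-- Linearization coefficient a₂₁. -/
noncomputable def a21 (r₀ r₂ K d a p c m : ℝ) : ℝ := c * vstar r₀ r₂ K d a p c m

/-- Linearization coefficient a₂₂. -/
noncomputable def a22 (r₀ r₂ K d a p c m : ℝ) : ℝ := -m * vstar r₀ r₂ K d a p c m

/-- Linearization coefficient b₁₁. -/
noncomputable def b11 (r₀ r₂ K d a p c m : ℝ) : ℝ := -a * ustar r₀ r₂ K d a p c m

/-- A_k = (d₁ + d₂)·k²/l² − a₂₂. -/
noncomputable def Ak (r₀ r₂ K d a p c m d₁ d₂ l : ℝ) (k : ℕ) : ℝ :=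
  (d₁ + d₂)*(k:ℝ)^2/l^2 - a22 r₀ r₂ K d a p c m

/-- B_k = d₁·d₂·k⁴/l⁴ − a₂₂·d₁·k²/l² − a₁₂·a₂₁. -/
noncomputable def Bk (r₀ r₂ K d a p c m d₁ d₂ l : ℝ) (k : ℕ) : ℝ :=
  d₁*d₂*(k:ℝ)^4/l^4 - a22 r₀ r₂ K d a p c m * d₁*(k:ℝ)^2/l^2 - a12 r₀ r₂ K d a p c m * a21 r₀ r₂ K d a p c m

/-- C_k = −b₁₁·d₂·k²/l² + a₂₂·b₁₁. -/
noncomputable def Ck (r₀ r₂ K d a p c m d₁ d₂ l : ℝ) (k : ℕ) : ℝ :=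
  -(b11 r₀ r₂ K d a p c m)*d₂*(k:ℝ)^2/l^2 + a22 r₀ r₂ K d a p c m * b11 r₀ r₂ K d a p c m

/-- The characteristic equation at mode k with delay τ:
λ² + A_k·λ + B_k + (−b₁₁·λ + C_k)·exp(−λτ) = 0. -/
def charEq (r₀ r₂ K d a p c m d₁ d₂ l : ℝ) (k : ℕ) (τ : ℝ) (z : ℂ) : Prop :=
  z^2 + (Ak r₀ r₂ K d a p c m d₁ d₂ l k : ℂ)*z + (Bk r₀ r₂ K d a p c m d₁ d₂ l k : ℂ)
    + (-(b11 r₀ r₂ K d a p c m : ℂ)*z + (Ck r₀ r₂ K d a p c m d₁ d₂ l k : ℂ)) * Complex.exp (-z*(τ:ℂ)) = 0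

/-!
At `λ = 0` the characteristic equation reduces to `B_k + C_k = 0`. Since `(H0)` makes the constant
term of the quadratic defining `v⋆` negative, `v⋆ > 0`, hence `u⋆ > 0`, and then `a₂₂ < 0`,
`b₁₁ < 0`, `a₁₂ a₂₁ < 0`. In
`B_k + C_k = d₁d₂k⁴/l⁴ − a₂₂d₁k²/l² − b₁₁d₂k²/l² + (a₂₂b₁₁ − a₁₂a₂₁)`
every summand is then nonnegative and the last one positive.
-/

theorem quadratic_root_pos {A B C : ℝ} (hA : 0 < A) (hC : C < 0) :
    0 < (-B + √(B ^ 2 - 4 * A * C)) / (2 * A) := by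
  have hB : B < √(B ^ 2 - 4 * A * C) := Real.lt_sqrt_of_sq_lt (by nlinarith)
  exact div_pos (by linarith) (by positivity)

section Equilibrium

variable {r₀ r₂ K d a p c m : ℝ}

theorem vstar_pos (hK : 0 < K) (ham : 0 < a * m + c * p) (hH0 : a * r₂ + c * d - c * r₀ < 0) :
    0 < vstar r₀ r₂ K d a p c m := by
  have h := quadratic_root_pos (B := a * m + c * p + K * (a * r₂ + c * d)) (mul_pos hK ham) hH0
  unfold vstar Delta
  simpa only [mul_assoc] using h

theorem ustar_pos (hr₂ : 0 < r₂) (hm : 0 ≤ m) (hc : 0 < c) (hv : 0 ≤ vstar r₀ r₂ K d a p c m) :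
    0 < ustar r₀ r₂ K d a p c m :=
  div_pos (add_pos_of_pos_of_nonneg hr₂ (mul_nonneg hm hv)) hc

theorem a12_neg (hr₀ : 0 ≤ r₀) (hK : 0 ≤ K) (hp : 0 < p) (hu : 0 < ustar r₀ r₂ K d a p c m) :
    a12 r₀ r₂ K d a p c m < 0 := by
  have h₁ : 0 ≤ K * r₀ * ustar r₀ r₂ K d a p c m / (1 + K * vstar r₀ r₂ K d a p c m) ^ 2 := by
    positivity
  have h₂ : 0 < p * ustar r₀ r₂ K d a p c m := mul_pos hp hu
  have h : a12 r₀ r₂ K d a p c m = -(K * r₀ * ustar r₀ r₂ K d a p c m /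
      (1 + K * vstar r₀ r₂ K d a p c m) ^ 2) - p * ustar r₀ r₂ K d a p c m := by
    unfold a12; ring
  linarith

end Equilibrium

section Modes

variable {r₀ r₂ K d a p c m d₁ d₂ l : ℝ}

theorem Bk_add_Ck_pos (hd₁ : 0 ≤ d₁) (hd₂ : 0 ≤ d₂) (h₂₂ : a22 r₀ r₂ K d a p c m < 0)
    (hb₁₁ : b11 r₀ r₂ K d a p c m < 0)
    (h₁₂₂₁ : a12 r₀ r₂ K d a p c m * a21 r₀ r₂ K d a p c m < 0) (k : ℕ) :
    0 < Bk r₀ r₂ K d a p c m d₁ d₂ l k + Ck r₀ r₂ K d a p c m d₁ d₂ l k := by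
  set x := (k : ℝ) ^ 2 / l ^ 2 with hx
  have hx₀ : 0 ≤ x := by positivity
  have hBk : Bk r₀ r₂ K d a p c m d₁ d₂ l k = d₁ * d₂ * x ^ 2 - a22 r₀ r₂ K d a p c m * d₁ * x
      - a12 r₀ r₂ K d a p c m * a21 r₀ r₂ K d a p c m := by
    unfold Bk; rw [hx]; ring
  have hCk : Ck r₀ r₂ K d a p c m d₁ d₂ l k
      = -b11 r₀ r₂ K d a p c m * d₂ * x + a22 r₀ r₂ K d a p c m * b11 r₀ r₂ K d a p c m := by
    unfold Ck; rw [hx]; ring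
  rw [hBk, hCk]
  nlinarith [mul_nonneg (mul_nonneg hd₁ hd₂) (sq_nonneg x),
    mul_nonneg (mul_nonneg (neg_nonneg.2 h₂₂.le) hd₁) hx₀,
    mul_nonneg (mul_nonneg (neg_nonneg.2 hb₁₁.le) hd₂) hx₀, mul_pos_of_neg_of_neg h₂₂ hb₁₁]

theorem charEq_zero_iff (k : ℕ) (τ : ℝ) :
    charEq r₀ r₂ K d a p c m d₁ d₂ l k τ 0 ↔
      Bk r₀ r₂ K d a p c m d₁ d₂ l k + Ck r₀ r₂ K d a p c m d₁ d₂ l k = 0 := by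
  unfold charEq
  simp only [ne_eq, OfNat.ofNat_ne_zero, not_false_eq_true, zero_pow, mul_zero, zero_add, neg_zero,
    zero_mul, Complex.exp_zero, mul_one]
  norm_cast

end Modes

theorem stmt4_general (r₀ r₂ K d a p c m d₁ d₂ l : ℝ) (hr₀ : 0 < r₀) (hr₂ : 0 < r₂) (hK : 0 < K) (ha : 0 < a) (hp : 0 < p) (hc : 0 < c) (hm : 0 < m)
    (hd₁ : 0 < d₁) (hd₂ : 0 < d₂)
    (hH0 : a*r₂ + c*d - c*r₀ < 0) :
    ∀ (k : ℕ) (τ : ℝ), ¬ charEq r₀ r₂ K d a p c m d₁ d₂ l k τ 0 ∧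
      0 < Bk r₀ r₂ K d a p c m d₁ d₂ l k + Ck r₀ r₂ K d a p c m d₁ d₂ l k ∧ Bk r₀ r₂ K d a p c m d₁ d₂ l k + Ck r₀ r₂ K d a p c m d₁ d₂ l k ≠ 0 := by
  intro k τ
  have ham : 0 < a * m + c * p := by positivity
  have hv : 0 < vstar r₀ r₂ K d a p c m := vstar_pos hK ham hH0
  have hu := ustar_pos hr₂ hm.le hc hv.le
  have h₂₂ : a22 r₀ r₂ K d a p c m < 0 := mul_neg_of_neg_of_pos (neg_neg_of_pos hm) hv
  have hb₁₁ : b11 r₀ r₂ K d a p c m < 0 := mul_neg_of_neg_of_pos (neg_neg_of_pos ha) hu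
  have h₁₂₂₁ : a12 r₀ r₂ K d a p c m * a21 r₀ r₂ K d a p c m < 0 :=
    mul_neg_of_neg_of_pos (a12_neg hr₀.le hK.le hp hu) (mul_pos hc hv)
  have hBC := Bk_add_Ck_pos (l := l) hd₁.le hd₂.le h₂₂ hb₁₁ h₁₂₂₁ k
  exact ⟨fun h => hBC.ne' ((charEq_zero_iff k τ).1 h), hBC, hBC.ne'⟩

theorem stmt4 (r₀ r₂ K d a p c m d₁ d₂ l : ℝ) (hr₀ : 0 < r₀) (hr₂ : 0 < r₂) (hK : 0 < K) (hd : 0 < d) (ha : 0 < a) (hp : 0 < p) (hc : 0 < c) (hm : 0 < m)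
    (hd₁ : 0 < d₁) (hd₂ : 0 < d₂) (hl : 0 < l)
    (hH0 : a*r₂ + c*d - c*r₀ < 0) :
    ∀ (k : ℕ) (τ : ℝ), ¬ charEq r₀ r₂ K d a p c m d₁ d₂ l k τ 0 ∧
      0 < Bk r₀ r₂ K d a p c m d₁ d₂ l k + Ck r₀ r₂ K d a p c m d₁ d₂ l k ∧ Bk r₀ r₂ K d a p c m d₁ d₂ l k + Ck r₀ r₂ K d a p c m d₁ d₂ l k ≠ 0 :=
  stmt4_general r₀ r₂ K d a p c m d₁ d₂ l hr₀ hr₂ hK ha hp hc hm hd₁ hd₂ hH0
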